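/- For all integers χ ≥ 0 and n ≥ 0, and rational a: evaluating f_{y,a} = g_{1,a}^y·f_{0,a} at a = r²-1 and comparing coefficients, one has the identity of generating functions ∑_{n≥0} C(χ - (r²-1)(n-1), n) z^n = g_{1,r²-1}(z)^χ · f_{0,r²-1}(z), where C is the generalized binomial coefficient and g_{1,a}, f_{0,a} are as defined above. -/

import Mathlib

open PowerSeries Finset

/-- Generalized binomial coefficient `C(x,n) = x(x-1)⋯(x-n+1)/n!`. -/
noncomputable def gchoose (x : ℚ) (n : ℕ) : ℚ :=
  (∏ i ∈ Finset.range n, (x - i)) / n.factorial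

/-- `g_{1,a}(z) = ∑_{n≥0} (1/(1-an)) C(1-an,n) z^n`, with the `n`-th coefficient
interpreted as `C(-an,n-1)/n` for `n ≥ 1` and constant term `1`. -/
noncomputable def gOne (a : ℚ) : PowerSeries ℚ :=
  PowerSeries.mk fun n =>
    if n = 0 then 1 else gchoose (-a * (n : ℚ)) (n - 1) / (n : ℚ)

/-- `f_{0,a}(z) = ∑_{n≥0} C(-a(n-1),n) z^n`. -/
noncomputable def fZero (a : ℚ) : PowerSeries ℚ :=
  PowerSeries.mk fun n => gchoose (-a * ((n : ℚ) - 1)) n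

/-!
Comparing coefficients, `f_{y+1,a} = g_{1,a} · f_{y,a}` is the Rothe–Hagen convolution
`∑_{i+j=n} A_i(x) C(y+jz, j) = C(x+y+nz, n)`, where `A_0(x) = 1`, `A_i(x) = x/(x+iz) · C(x+iz, i)`,
taken at `x = 1`, `z = -a`; iterating from `f_{0,a}` gives the theorem.
We prove the convolution by induction on `n`: both sides change by the same amount when `x`
drops by `1`, by the Pascal rule and the induction hypothesis at `x + z - 1`, and agree at `x = 0`.
For integral `z` the set of integers is closed under `x ↦ x + z - 1`, so the induction can be run
over `x ∈ ℤ`, where periodicity and the value at `0` pin the difference down.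
-/

theorem gchoose_zero (x : ℚ) : gchoose x 0 = 1 := by simp [gchoose]

theorem gchoose_succ (x : ℚ) (n : ℕ) :
    gchoose x (n + 1) = gchoose x n * (x - n) / (n + 1) := by
  simp only [gchoose, prod_range_succ, Nat.factorial_succ]
  push_cast
  field_simp

theorem gchoose_succ_eq_mul_gchoose_sub_one (x : ℚ) (n : ℕ) :
    gchoose x (n + 1) = x * gchoose (x - 1) n / (n + 1) := by
  simp only [gchoose, prod_range_succ', Nat.factorial_succ]
  push_cast
  simp only [sub_sub, add_comm (1 : ℚ), sub_zero]
  field_simp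

theorem gchoose_succ_succ (x : ℚ) (n : ℕ) :
    gchoose (x + 1) (n + 1) = gchoose x n + gchoose x (n + 1) := by
  rw [gchoose_succ_eq_mul_gchoose_sub_one, gchoose_succ, add_sub_cancel_right]
  field_simp
  ring

/-- `rotheCoeff z x i = x/(x+iz) · C(x+iz, i)`, the coefficient of `g_{1,-z}(t)^x`. -/
noncomputable def rotheCoeff (z x : ℚ) : ℕ → ℚ
  | 0 => 1
  | i + 1 => x * gchoose (x + (i + 1) * z - 1) i / (i + 1)

@[simp]
theorem rotheCoeff_zero (z x : ℚ) : rotheCoeff z x 0 = 1 := rfl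

theorem rotheCoeff_zero_succ (z : ℚ) (i : ℕ) : rotheCoeff z 0 (i + 1) = 0 := by
  simp [rotheCoeff]

theorem rotheCoeff_succ_sub (z x : ℚ) (i : ℕ) :
    rotheCoeff z x (i + 1) - rotheCoeff z (x - 1) (i + 1) = rotheCoeff z (x + z - 1) i := by
  cases i with
  | zero => simp [rotheCoeff, gchoose_zero]
  | succ i =>
    set c := x + (i + 2) * z - 2
    have hx : x + ((i + 1 : ℕ) + 1) * z - 1 = c + 1 := by push_cast; ring
    have hx' : x - 1 + ((i + 1 : ℕ) + 1) * z - 1 = c := by push_cast; ring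
    have hx'' : x + z - 1 + ((i : ℕ) + 1) * z - 1 = c := by ring
    simp only [rotheCoeff, hx, hx', hx'', gchoose_succ_succ, gchoose_succ c i]
    push_cast
    field_simp
    ring

noncomputable def rotheSum (z x y : ℚ) (n : ℕ) : ℚ :=
  ∑ p ∈ antidiagonal n, rotheCoeff z x p.1 * gchoose (y + p.2 * z) p.2

theorem rotheSum_zero_left (z y : ℚ) (n : ℕ) : rotheSum z 0 y n = gchoose (y + n * z) n := by
  cases n with
  | zero => simp [rotheSum, rotheCoeff]
  | succ n => simp [rotheSum, Nat.sum_antidiagonal_succ, rotheCoeff_zero_succ]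

theorem rotheSum_succ_sub (z x y : ℚ) (n : ℕ) :
    rotheSum z x y (n + 1) - rotheSum z (x - 1) y (n + 1) = rotheSum z (x + z - 1) y n := by
  rw [rotheSum, rotheSum, rotheSum, Nat.sum_antidiagonal_succ, Nat.sum_antidiagonal_succ,
    add_sub_add_comm, ← sum_sub_distrib]
  simp only [rotheCoeff_zero, sub_self, zero_add, ← sub_mul, rotheCoeff_succ_sub]

theorem rotheSum_intCast (z x : ℤ) (y : ℚ) (n : ℕ) :
    rotheSum z x y n = gchoose (x + y + n * z) n := by
  induction n generalizing x with
  | zero => simp [rotheSum, rotheCoeff, gchoose_zero]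
  | succ n ih =>
    let defect (x : ℤ) : ℚ := rotheSum z x y (n + 1) - gchoose (x + y + (n + 1 : ℕ) * z) (n + 1)
    have periodic : Function.Periodic defect 1 := fun x => by
      have step := rotheSum_succ_sub z (x + 1 : ℤ) y n
      rw [Int.cast_add, Int.cast_one, add_sub_cancel_right,
        show (x : ℚ) + 1 + z - 1 = (x + z : ℤ) by push_cast; ring, ih, sub_eq_iff_eq_add] at step
      simp only [defect, step, Int.cast_add, Int.cast_one]
      rw [show (x + 1 + y + (n + 1 : ℕ) * z : ℚ) = x + y + (n + 1 : ℕ) * z + 1 by ring,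
        gchoose_succ_succ, show (x + z + y + n * z : ℚ) = x + y + (n + 1 : ℕ) * z by
          push_cast; ring]
      ring
    have base : defect 0 = 0 := by simp [defect, rotheSum_zero_left]
    have h := periodic.int_mul_eq x
    rwa [mul_one, base, sub_eq_zero] at h

/-- The series `f_{y,a}`. -/
noncomputable def fSeries (a y : ℚ) : PowerSeries ℚ :=
  PowerSeries.mk fun n => gchoose (y - a * ((n : ℚ) - 1)) n

theorem coeff_gOne (a : ℚ) (i : ℕ) : coeff i (gOne a) = rotheCoeff (-a) 1 i := by
  cases i with
  | zero => simp [gOne]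
  | succ i =>
    simp only [gOne, coeff_mk, rotheCoeff, Nat.add_sub_cancel]
    push_cast
    ring_nf

theorem fSeries_zero (a : ℚ) : fSeries a 0 = fZero a := by
  simp [fSeries, fZero]

theorem fSeries_add_one (a : ℤ) (y : ℚ) : fSeries a (y + 1) = gOne a * fSeries a y := by
  ext n
  have rothe := rotheSum_intCast (-a) 1 (y + a) n
  push_cast at rothe
  rw [fSeries, coeff_mk, show y + 1 - a * (n - 1) = 1 + (y + a) + n * -a by ring, ← rothe,
    rotheSum, coeff_mul]
  refine sum_congr rfl fun p _ => ?_
  rw [coeff_gOne, fSeries, coeff_mk, show y - a * (p.2 - 1) = y + a + p.2 * -a by ring]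

theorem fSeries_natCast (a : ℤ) (m : ℕ) : fSeries a m = gOne a ^ m * fZero a := by
  induction m with
  | zero => simp [fSeries_zero]
  | succ m ih => rw [Nat.cast_succ, fSeries_add_one, ih, pow_succ', mul_assoc]

/-- For integers `χ ≥ 0` and `r`, with `a = r² - 1`:
`∑_{n≥0} C(χ - (r²-1)(n-1), n) z^n = g_{1,r²-1}(z)^χ · f_{0,r²-1}(z)`. -/
theorem stmt17 (r : ℤ) (χ : ℕ) :
    (PowerSeries.mk fun n =>
        gchoose ((χ : ℚ) - ((r : ℚ) ^ 2 - 1) * ((n : ℚ) - 1)) n) =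
      gOne ((r : ℚ) ^ 2 - 1) ^ χ * fZero ((r : ℚ) ^ 2 - 1) := by
  have h := fSeries_natCast (r ^ 2 - 1) χ
  push_cast at h
  exact h
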